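/- Let Z be a real reflexive Banach space continuously and densely embedded in a real reflexive Banach space V, τ > 0, and let R : Z → [0,∞] be proper, convex, lower semicontinuous and positively 1-homogeneous. Suppose ξ ∈ Z*, w ∈ Z with ‖w‖_V ≤ τ, and ζ ∈ V* ⊆ Z* satisfy: ζ ∈ ∂I_τ(w), τ·dist_{V*}(−ξ, ∂R(0)) = ⟨ζ, w⟩, and R(v) ≥ −⟨ζ + ξ, v⟩ for all v ∈ Z. Then dist_{V*}(−ξ, ∂R(0)) = ‖ζ‖_{V*}, and consequently the discrete complementarity relation (τ − ‖w‖_V)·dist_{V*}(−ξ, ∂R(0)) = 0 holds together with (τ − ‖w‖_V)/τ ≥ 0 and (τ − ‖w‖_V)/τ + ‖w‖_V/τ = 1. -/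

import Mathlib

open Set Filter

variable {Z V : Type*} [NormedAddCommGroup Z] [NormedSpace ℝ Z]
  [NormedAddCommGroup V] [NormedSpace ℝ V]

/-- `η ∈ Z*` is bounded with respect to the `V`-norm on `Z` (i.e. `η` belongs to `V*`,
identified with a subspace of `Z*` via the dense embedding `ι : Z ↪ V`). -/
def InVdual (ι : Z →L[ℝ] V) (η : Z →L[ℝ] ℝ) : Prop :=
  ∃ C : ℝ, ∀ z : Z, |η z| ≤ C * ‖ι z‖

/-- The `V*`-norm of `η ∈ Z*`: `‖η‖_{V*} = sup{⟨η, v⟩ : v ∈ Z, ‖v‖_V ≤ 1}`. -/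
noncomputable def VdualNorm (ι : Z →L[ℝ] V) (η : Z →L[ℝ] ℝ) : ℝ :=
  sSup {r : ℝ | ∃ z : Z, ‖ι z‖ ≤ 1 ∧ r = η z}

/-- The extended distance `dist_{V*}(η, A) = inf{‖η − w‖_{V*} : w ∈ A, η − w ∈ V*}`,
interpreted as `+∞` (in `EReal`) if no such `w` exists. -/
noncomputable def distVdual (ι : Z →L[ℝ] V) (η : Z →L[ℝ] ℝ) (A : Set (Z →L[ℝ] ℝ)) : EReal :=
  sInf {r : EReal | ∃ w ∈ A, InVdual ι (η - w) ∧ r = ((VdualNorm ι (η - w) : ℝ) : EReal)}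

/-- The indicator functional `I_τ` of `{v ∈ Z : ‖v‖_V ≤ τ}`, with values in `EReal`. -/
noncomputable def indic (ι : Z →L[ℝ] V) (τ : ℝ) (v : Z) : EReal :=
  if ‖ι v‖ ≤ τ then 0 else ⊤

/-- The subdifferential of an extended-real-valued convex functional `f : Z → EReal` at `x`:
`∂f(x) = {η ∈ Z* : f(y) ≥ f(x) + ⟨η, y − x⟩ for all y ∈ Z}`. -/
def subdiffE (f : Z → EReal) (x : Z) : Set (Z →L[ℝ] ℝ) :=
  {η | ∀ y : Z, f x + ((η (y - x) : ℝ) : EReal) ≤ f y}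

/-- The Fenchel conjugate `f*(η) = sup_{x ∈ Z} (⟨η, x⟩ − f(x))`, with values in `EReal`. -/
noncomputable def conjE (f : Z → EReal) (η : Z →L[ℝ] ℝ) : EReal :=
  ⨆ x : Z, ((η x : ℝ) : EReal) - f x

/-!
Since `ζ ∈ ∂I_τ(w)`, the functional `ζ` attains its supremum over the `V`-ball of radius `τ`
at `w`, so `⟨ζ, w⟩ = τ ‖ζ‖_{V*}`. Dividing the identity `τ·dist = ⟨ζ, w⟩` by `τ` identifies the
distance with `‖ζ‖_{V*}`, and complementarity follows from
`τ ‖ζ‖_{V*} = ⟨ζ, w⟩ ≤ ‖ζ‖_{V*} ‖w‖_V ≤ τ ‖ζ‖_{V*}`.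
-/

section VdualNorm

variable {ι : Z →L[ℝ] V} {η : Z →L[ℝ] ℝ}

theorem InVdual.bddAbove (hη : InVdual ι η) :
    BddAbove {r : ℝ | ∃ z : Z, ‖ι z‖ ≤ 1 ∧ r = η z} := by
  obtain ⟨C, hC⟩ := hη
  refine ⟨|C|, ?_⟩
  rintro _ ⟨z, hz, rfl⟩
  calc η z ≤ |η z| := le_abs_self _
    _ ≤ C * ‖ι z‖ := hC z
    _ ≤ |C| * 1 := mul_le_mul (le_abs_self C) hz (norm_nonneg _) (abs_nonneg C)
    _ = |C| := mul_one _

theorem le_vdualNorm (hη : InVdual ι η) {z : Z} (hz : ‖ι z‖ ≤ 1) : η z ≤ VdualNorm ι η :=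
  le_csSup hη.bddAbove ⟨z, hz, rfl⟩

theorem vdualNorm_nonneg (hη : InVdual ι η) : 0 ≤ VdualNorm ι η := by
  simpa using le_vdualNorm hη (z := 0) (by simp)

theorem vdualNorm_le {c : ℝ} (h : ∀ z : Z, ‖ι z‖ ≤ 1 → η z ≤ c) : VdualNorm ι η ≤ c :=
  csSup_le ⟨η 0, 0, by simp, rfl⟩ (by rintro _ ⟨z, hz, rfl⟩; exact h z hz)

theorem apply_le_vdualNorm_mul (hη : InVdual ι η) (z : Z) : η z ≤ VdualNorm ι η * ‖ι z‖ := by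
  rcases (norm_nonneg (ι z)).eq_or_lt with h0 | hpos
  · obtain ⟨C, hC⟩ := hη
    have : |η z| ≤ 0 := by simpa [← h0] using hC z
    rw [← h0, mul_zero]
    exact (le_abs_self _).trans this
  · have hz : ‖ι (‖ι z‖⁻¹ • z)‖ ≤ 1 := by
      rw [map_smul, norm_smul, norm_inv, norm_norm, inv_mul_cancel₀ hpos.ne']
    have := le_vdualNorm hη hz
    rw [map_smul, smul_eq_mul, inv_mul_le_iff₀ hpos] at this
    linarith

end VdualNorm

theorem apply_le_of_mem_subdiffE_indic {ι : Z →L[ℝ] V} {τ : ℝ} {ζ : Z →L[ℝ] ℝ} {w : Z}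
    (hw : ‖ι w‖ ≤ τ) (hζ : ζ ∈ subdiffE (indic ι τ) w) {v : Z} (hv : ‖ι v‖ ≤ τ) :
    ζ v ≤ ζ w := by
  have h := hζ v
  rw [indic, indic, if_pos hw, if_pos hv, zero_add, EReal.coe_nonpos, map_sub, sub_nonpos] at h
  exact h

theorem apply_eq_mul_vdualNorm_of_mem_subdiffE_indic {ι : Z →L[ℝ] V} {τ : ℝ} (hτ : 0 < τ)
    {ζ : Z →L[ℝ] ℝ} {w : Z} (hw : ‖ι w‖ ≤ τ) (hζV : InVdual ι ζ)
    (hζ : ζ ∈ subdiffE (indic ι τ) w) : ζ w = τ * VdualNorm ι ζ := by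
  refine le_antisymm ?_ ?_
  · calc ζ w ≤ VdualNorm ι ζ * ‖ι w‖ := apply_le_vdualNorm_mul hζV w
      _ ≤ VdualNorm ι ζ * τ := mul_le_mul_of_nonneg_left hw (vdualNorm_nonneg hζV)
      _ = τ * VdualNorm ι ζ := mul_comm _ _
  · rw [← le_div_iff₀' hτ]
    refine vdualNorm_le fun z hz => ?_
    have hτz : ‖ι (τ • z)‖ ≤ τ := by
      rw [map_smul, norm_smul, Real.norm_of_nonneg hτ.le]
      exact mul_le_of_le_one_right hτ.le hz
    have := apply_le_of_mem_subdiffE_indic hw hζ hτz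
    rw [map_smul, smul_eq_mul] at this
    rwa [le_div_iff₀' hτ]

theorem EReal.eq_of_coe_mul_eq_coe_mul {τ a : ℝ} (hτ : τ ≠ 0) {d : EReal}
    (h : (τ : EReal) * d = ((τ * a : ℝ) : EReal)) : d = a := by
  calc d = ((τ⁻¹ * τ : ℝ) : EReal) * d := by rw [inv_mul_cancel₀ hτ, EReal.coe_one, one_mul]
    _ = ((τ⁻¹ * (τ * a) : ℝ) : EReal) := by rw [EReal.coe_mul, mul_assoc, h, ← EReal.coe_mul]
    _ = a := by rw [inv_mul_cancel_left₀ hτ]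

theorem stmt12_general
    (ι : Z →L[ℝ] V)
    (τ : ℝ) (hτ : 0 < τ)
    (R : Z → EReal)
    (ξ ζ : Z →L[ℝ] ℝ) (w : Z) (hw : ‖ι w‖ ≤ τ)
    (hζV : InVdual ι ζ)
    (hζsub : ζ ∈ subdiffE (indic ι τ) w)
    (hident : (τ : EReal) * distVdual ι (-ξ) (subdiffE R 0) = ((ζ w : ℝ) : EReal)) :
    distVdual ι (-ξ) (subdiffE R 0) = ((VdualNorm ι ζ : ℝ) : EReal) ∧
    ((τ - ‖ι w‖ : ℝ) : EReal) * distVdual ι (-ξ) (subdiffE R 0) = 0 ∧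
    0 ≤ (τ - ‖ι w‖) / τ ∧
    (τ - ‖ι w‖) / τ + ‖ι w‖ / τ = 1 := by
  have hζw : ζ w = τ * VdualNorm ι ζ :=
    apply_eq_mul_vdualNorm_of_mem_subdiffE_indic hτ hw hζV hζsub
  have hdist : distVdual ι (-ξ) (subdiffE R 0) = ((VdualNorm ι ζ : ℝ) : EReal) :=
    EReal.eq_of_coe_mul_eq_coe_mul hτ.ne' (hζw ▸ hident)
  have hcompl : (τ - ‖ι w‖) * VdualNorm ι ζ = 0 := by
    have := apply_le_vdualNorm_mul hζV w
    nlinarith [vdualNorm_nonneg hζV]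
  refine ⟨hdist, ?_, div_nonneg (sub_nonneg.2 hw) hτ.le, ?_⟩
  · rw [hdist, ← EReal.coe_mul, hcompl, EReal.coe_zero]
  · rw [← add_div, sub_add_cancel, div_self hτ.ne']

/-- **Discrete complementarity.** Let `Z` be a real reflexive Banach space continuously and
densely embedded in a real reflexive Banach space `V` (via `ι`), `τ > 0`, and let
`R : Z → [0,∞]` be proper, convex, lower semicontinuous and positively 1-homogeneous.
Suppose `ξ ∈ Z*`, `w ∈ Z` with `‖w‖_V ≤ τ`, and `ζ ∈ V* ⊆ Z*` satisfy `ζ ∈ ∂I_τ(w)`,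
`τ·dist_{V*}(−ξ, ∂R(0)) = ⟨ζ, w⟩`, and `R(v) ≥ −⟨ζ + ξ, v⟩` for all `v ∈ Z`. Then
`dist_{V*}(−ξ, ∂R(0)) = ‖ζ‖_{V*}`, and consequently
`(τ − ‖w‖_V)·dist_{V*}(−ξ, ∂R(0)) = 0`, `(τ − ‖w‖_V)/τ ≥ 0` and
`(τ − ‖w‖_V)/τ + ‖w‖_V/τ = 1`. -/
theorem stmt12 [CompleteSpace Z] [CompleteSpace V]
    (hreflZ : Function.Surjective ⇑(NormedSpace.inclusionInDoubleDual ℝ Z))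
    (hreflV : Function.Surjective ⇑(NormedSpace.inclusionInDoubleDual ℝ V))
    (ι : Z →L[ℝ] V) (hinj : Function.Injective ι) (hdense : DenseRange ι)
    (τ : ℝ) (hτ : 0 < τ)
    (R : Z → EReal) (hR0 : ∀ v : Z, 0 ≤ R v) (hRproper : ∃ v : Z, R v ≠ ⊤)
    (hRconvex : ∀ x y : Z, ∀ a b : ℝ, 0 ≤ a → 0 ≤ b → a + b = 1 →
      R (a • x + b • y) ≤ (a : EReal) * R x + (b : EReal) * R y)
    (hRlsc : LowerSemicontinuous R)
    (hRhom : ∀ (v : Z) (l : ℝ), 0 < l → R (l • v) = (l : EReal) * R v)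
    (ξ ζ : Z →L[ℝ] ℝ) (w : Z) (hw : ‖ι w‖ ≤ τ)
    (hζV : InVdual ι ζ)
    (hζsub : ζ ∈ subdiffE (indic ι τ) w)
    (hident : (τ : EReal) * distVdual ι (-ξ) (subdiffE R 0) = ((ζ w : ℝ) : EReal))
    (hlower : ∀ v : Z, ((-(ζ v + ξ v) : ℝ) : EReal) ≤ R v) :
    distVdual ι (-ξ) (subdiffE R 0) = ((VdualNorm ι ζ : ℝ) : EReal) ∧
    ((τ - ‖ι w‖ : ℝ) : EReal) * distVdual ι (-ξ) (subdiffE R 0) = 0 ∧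
    0 ≤ (τ - ‖ι w‖) / τ ∧
    (τ - ‖ι w‖) / τ + ‖ι w‖ / τ = 1 :=
  stmt12_general ι τ hτ R ξ ζ w hw hζV hζsub hident
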